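/- Let m ≥ 2, let U ⊆ ℝ^m be open, let Θ¹, Θ², Θ³ : U → ℝ^m be smooth coefficient maps of one-forms satisfying the structure equations of a pseudo-spherical surface in m variables, let θ : U → ℝ be smooth with ∂_A θ = Θ¹_A·cos θ + Θ²_A·sin θ − Θ³_A for every index A, and let β : U → ℝ be smooth and strictly positive with ∂_A(log β) = −Θ¹_A·sin θ + Θ²_A·cos θ for every index A. Then the one-form with components ξ_A = β·(Θ¹_A·cos θ + Θ²_A·sin θ) is closed, i.e., ∂_A ξ_B = ∂_B ξ_A on U for all indices A, B. -/

import Mathlib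

open Real

/-- Partial derivative in the `A`-th coordinate direction of `ℝ^m = Fin m → ℝ`. -/
noncomputable def pd {m : ℕ} (A : Fin m) (f : (Fin m → ℝ) → ℝ) (p : Fin m → ℝ) : ℝ :=
  fderiv ℝ f p (Pi.single A 1)


lemma pd_mul {m : ℕ} (A : Fin m) {f g : (Fin m → ℝ) → ℝ} {p : Fin m → ℝ}
    (hf : DifferentiableAt ℝ f p) (hg : DifferentiableAt ℝ g p) :
    pd A (fun q => f q * g q) p = pd A f p * g p + f p * pd A g p := by
  simp only [pd, fderiv_fun_mul hf hg, ContinuousLinearMap.add_apply,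
    ContinuousLinearMap.smul_apply, smul_eq_mul]
  ring

lemma pd_add {m : ℕ} (A : Fin m) {f g : (Fin m → ℝ) → ℝ} {p : Fin m → ℝ}
    (hf : DifferentiableAt ℝ f p) (hg : DifferentiableAt ℝ g p) :
    pd A (fun q => f q + g q) p = pd A f p + pd A g p := by
  simp only [pd, fderiv_fun_add hf hg, ContinuousLinearMap.add_apply]

lemma pd_cos {m : ℕ} (A : Fin m) {θ : (Fin m → ℝ) → ℝ} {p : Fin m → ℝ}
    (hθ : DifferentiableAt ℝ θ p) :
    pd A (fun q => Real.cos (θ q)) p = -Real.sin (θ p) * pd A θ p := by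
  have h : HasFDerivAt (fun q => Real.cos (θ q)) (-Real.sin (θ p) • fderiv ℝ θ p) p :=
    (Real.hasDerivAt_cos (θ p)).comp_hasFDerivAt p hθ.hasFDerivAt
  simp only [pd, h.fderiv, ContinuousLinearMap.smul_apply, smul_eq_mul]

lemma pd_sin {m : ℕ} (A : Fin m) {θ : (Fin m → ℝ) → ℝ} {p : Fin m → ℝ}
    (hθ : DifferentiableAt ℝ θ p) :
    pd A (fun q => Real.sin (θ q)) p = Real.cos (θ p) * pd A θ p := by
  have h : HasFDerivAt (fun q => Real.sin (θ q)) (Real.cos (θ p) • fderiv ℝ θ p) p :=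
    (Real.hasDerivAt_sin (θ p)).comp_hasFDerivAt p hθ.hasFDerivAt
  simp only [pd, h.fderiv, ContinuousLinearMap.smul_apply, smul_eq_mul]

lemma pd_log {m : ℕ} (A : Fin m) {β : (Fin m → ℝ) → ℝ} {p : Fin m → ℝ}
    (hβ : DifferentiableAt ℝ β p) (hβ0 : β p ≠ 0) :
    pd A (fun q => Real.log (β q)) p = (β p)⁻¹ * pd A β p := by
  have h : HasFDerivAt (fun q => Real.log (β q)) ((β p)⁻¹ • fderiv ℝ β p) p :=
    (Real.hasDerivAt_log hβ0).comp_hasFDerivAt p hβ.hasFDerivAt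
  simp only [pd, h.fderiv, ContinuousLinearMap.smul_apply, smul_eq_mul]

/-- The coefficient maps `Θ¹, Θ², Θ³ : V → ℝ^m` of one-forms `Θ^α = Σ_A Θ^α_A dz_A`
satisfy the structure equations of a pseudo-spherical surface in `m` variables:
`dΘ¹ = Θ³ ∧ Θ², dΘ² = Θ¹ ∧ Θ³, dΘ³ = Θ¹ ∧ Θ²`. -/
def StructEqM {m : ℕ} (V : Set (Fin m → ℝ)) (Θ1 Θ2 Θ3 : (Fin m → ℝ) → Fin m → ℝ) : Prop :=
  ∀ p ∈ V, ∀ A B : Fin m,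
    pd A (fun q => Θ1 q B) p - pd B (fun q => Θ1 q A) p
      = Θ3 p A * Θ2 p B - Θ3 p B * Θ2 p A ∧
    pd A (fun q => Θ2 q B) p - pd B (fun q => Θ2 q A) p
      = Θ1 p A * Θ3 p B - Θ1 p B * Θ3 p A ∧
    pd A (fun q => Θ3 q B) p - pd B (fun q => Θ3 q A) p
      = Θ1 p A * Θ2 p B - Θ1 p B * Θ2 p A

/-- given a solution `θ` of the Pfaffian system and a positive `β` with
`d(log β) = −Θ¹ sin θ + Θ² cos θ`, the one-form `β (Θ¹ cos θ + Θ² sin θ)` is closed. -/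
theorem closedness_of_scaled_rotated_form
    (m : ℕ) (hm : 2 ≤ m)
    (U : Set (Fin m → ℝ)) (hU : IsOpen U)
    (Θ1 Θ2 Θ3 : (Fin m → ℝ) → Fin m → ℝ)
    (hΘ1 : ContDiffOn ℝ (⊤ : ℕ∞) Θ1 U) (hΘ2 : ContDiffOn ℝ (⊤ : ℕ∞) Θ2 U) (hΘ3 : ContDiffOn ℝ (⊤ : ℕ∞) Θ3 U)
    (hstruct : StructEqM U Θ1 Θ2 Θ3)
    (θ : (Fin m → ℝ) → ℝ) (hθ : ContDiffOn ℝ (⊤ : ℕ∞) θ U)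
    (hpfaff : ∀ q ∈ U, ∀ A : Fin m,
      pd A θ q = Θ1 q A * Real.cos (θ q) + Θ2 q A * Real.sin (θ q) - Θ3 q A)
    (β : (Fin m → ℝ) → ℝ) (hβ : ContDiffOn ℝ (⊤ : ℕ∞) β U) (hβpos : ∀ q ∈ U, 0 < β q)
    (hlog : ∀ q ∈ U, ∀ A : Fin m,
      pd A (fun z => Real.log (β z)) q
        = -Θ1 q A * Real.sin (θ q) + Θ2 q A * Real.cos (θ q)) :
    ∀ p ∈ U, ∀ A B : Fin m,
      pd A (fun q => β q * (Θ1 q B * Real.cos (θ q) + Θ2 q B * Real.sin (θ q))) p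
        = pd B (fun q => β q * (Θ1 q A * Real.cos (θ q) + Θ2 q A * Real.sin (θ q))) p := by
  intro p hp A B
  have hmem : U ∈ nhds p := hU.mem_nhds hp
  have hβd : DifferentiableAt ℝ β p := (hβ.differentiableOn (by simp)).differentiableAt hmem
  have hθd : DifferentiableAt ℝ θ p := (hθ.differentiableOn (by simp)).differentiableAt hmem
  have hΘ1d : ∀ C : Fin m, DifferentiableAt ℝ (fun q => Θ1 q C) p := fun C =>
    differentiableAt_pi.mp ((hΘ1.differentiableOn (by simp)).differentiableAt hmem) C
  have hΘ2d : ∀ C : Fin m, DifferentiableAt ℝ (fun q => Θ2 q C) p := fun C =>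
    differentiableAt_pi.mp ((hΘ2.differentiableOn (by simp)).differentiableAt hmem) C
  have hβpd : ∀ C : Fin m, pd C β p
      = β p * (-Θ1 p C * Real.sin (θ p) + Θ2 p C * Real.cos (θ p)) := by
    intro C
    have h1 := hlog p hp C
    rw [pd_log C hβd (ne_of_gt (hβpos p hp))] at h1
    have hb : β p ≠ 0 := (hβpos p hp).ne'
    calc pd C β p = β p * ((β p)⁻¹ * pd C β p) := by field_simp
    _ = _ := by rw [h1]
  have key : ∀ C D : Fin m,
      pd C (fun q => β q * (Θ1 q D * Real.cos (θ q) + Θ2 q D * Real.sin (θ q))) p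
      = β p * (-Θ1 p C * Real.sin (θ p) + Θ2 p C * Real.cos (θ p))
          * (Θ1 p D * Real.cos (θ p) + Θ2 p D * Real.sin (θ p))
        + β p * ( pd C (fun q => Θ1 q D) p * Real.cos (θ p)
          + Θ1 p D * (-Real.sin (θ p)
              * (Θ1 p C * Real.cos (θ p) + Θ2 p C * Real.sin (θ p) - Θ3 p C))
          + pd C (fun q => Θ2 q D) p * Real.sin (θ p)
          + Θ2 p D * (Real.cos (θ p)
              * (Θ1 p C * Real.cos (θ p) + Θ2 p C * Real.sin (θ p) - Θ3 p C)) ) := by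
    intro C D
    rw [pd_mul C hβd (((hΘ1d D).fun_mul hθd.cos).fun_add ((hΘ2d D).fun_mul hθd.sin)),
        pd_add C ((hΘ1d D).fun_mul hθd.cos) ((hΘ2d D).fun_mul hθd.sin),
        pd_mul C (hΘ1d D) hθd.cos, pd_mul C (hΘ2d D) hθd.sin,
        pd_cos C hθd, pd_sin C hθd, hβpd C, hpfaff p hp C]
    ring
  obtain ⟨h1, h2, h3⟩ := hstruct p hp A B
  rw [key A B, key B A]
  linear_combination β p * Real.cos (θ p) * h1 + β p * Real.sin (θ p) * h2
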